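/- arXiv:1707.05322 — 5 statements merged into one kernel-verified Lean document; each statement's English description precedes it below -/
import Mathlib

section
/- The subgroup of SL(2,Z) generated by the matrices [[1,2],[0,1]] and [[1,0],[2,1]] is a free group of rank 2. -/
/-! Ping-pong on the nonzero vectors of `ℤ²`. Split `ℤ² ∖ 0` into four cones according to
the sign of `x * y` and to which of `|x|`, `|y|` is larger. The shear
`f1^{±1} : (x, y) ↦ (x ± 2y, y)` pushes every vector outside the cone of `f1^{∓1}` into its
own cone, where `|x| ≥ |y|`; symmetrically for `f2^{±1} : (x, y) ↦ (x, y ± 2x)`. The ping-pong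
lemma then makes the homomorphism from the free group on two letters injective, and its image
is the subgroup generated by `f1` and `f2`. -/

/-- The matrix `[[1,2],[0,1]]` as an element of `SL(2,ℤ)`. -/
def f1 : Matrix.SpecialLinearGroup (Fin 2) ℤ :=
  ⟨!![1, 2; 0, 1], by norm_num [Matrix.det_fin_two_of]⟩

/-- The matrix `[[1,0],[2,1]]` as an element of `SL(2,ℤ)`. -/
def f2 : Matrix.SpecialLinearGroup (Fin 2) ℤ :=
  ⟨!![1, 0; 2, 1], by norm_num [Matrix.det_fin_two_of]⟩

open scoped MatrixGroups Pointwise Function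

def SubMulAction.nonzero (G M : Type*) [Group G] [AddMonoid M] [DistribMulAction G M] :
    SubMulAction G M where
  carrier := {v | v ≠ 0}
  smul_mem' g _ hv := (smul_ne_zero_iff_ne g).2 hv

@[simp]
lemma SubMulAction.mem_nonzero {G M : Type*} [Group G] [AddMonoid M] [DistribMulAction G M]
    {v : M} : v ∈ SubMulAction.nonzero G M ↔ v ≠ 0 :=
  Iff.rfl

namespace Sanov

lemma f1_smul (v : Fin 2 → ℤ) : f1 • v = ![v 0 + 2 * v 1, v 1] := by
  rw [Matrix.SpecialLinearGroup.smul_def, Matrix.smul_eq_mulVec, Matrix.mulVec_fin_two]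
  simp [f1]

lemma f2_smul (v : Fin 2 → ℤ) : f2 • v = ![v 0, 2 * v 0 + v 1] := by
  rw [Matrix.SpecialLinearGroup.smul_def, Matrix.smul_eq_mulVec, Matrix.mulVec_fin_two]
  simp [f2]

lemma f1_inv_smul (v : Fin 2 → ℤ) : f1⁻¹ • v = ![v 0 - 2 * v 1, v 1] := by
  rw [inv_smul_eq_iff, f1_smul]
  ext i
  fin_cases i <;> simp

lemma f2_inv_smul (v : Fin 2 → ℤ) : f2⁻¹ • v = ![v 0, v 1 - 2 * v 0] := by
  rw [inv_smul_eq_iff, f2_smul]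
  ext i
  fin_cases i <;> simp

abbrev NonzeroVector : Type := SubMulAction.nonzero SL(2, ℤ) (Fin 2 → ℤ)

lemma NonzeroVector.coord_ne_zero (v : NonzeroVector) : v.1 0 ≠ 0 ∨ v.1 1 ≠ 0 := by
  by_contra! h
  exact v.2 (funext (Fin.forall_fin_two.2 h))

def generator : Fin 2 → SL(2, ℤ) := ![f1, f2]

/- Writing `v = (x, y)`, the cones are, in order, `{0 < xy, |y| ≤ |x|}`, `{0 ≤ xy, |x| < |y|}`
(attracting) and `{xy ≤ 0, |y| < |x|}`, `{xy < 0, |x| ≤ |y|}` (repelling): a partition of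
`ℤ² ∖ 0`, with the boundary rays `x = ±y`, `x = 0`, `y = 0` assigned so that the ping-pong
inclusions hold on them too. -/
def attractingCone : Fin 2 → Set NonzeroVector :=
  ![{v | (0 < v.1 1 ∧ v.1 1 ≤ v.1 0) ∨ (v.1 0 ≤ v.1 1 ∧ v.1 1 < 0)},
    {v | (0 ≤ v.1 0 ∧ v.1 0 < v.1 1) ∨ (v.1 1 < v.1 0 ∧ v.1 0 ≤ 0)}]

def repellingCone : Fin 2 → Set NonzeroVector :=
  ![{v | (0 < v.1 0 ∧ -v.1 0 < v.1 1 ∧ v.1 1 ≤ 0) ∨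
          (v.1 0 < 0 ∧ 0 ≤ v.1 1 ∧ v.1 1 < -v.1 0)},
    {v | (0 < v.1 0 ∧ v.1 0 ≤ -v.1 1) ∨ (v.1 0 < 0 ∧ -v.1 0 ≤ v.1 1)}]

lemma attractingCone_nonempty (i : Fin 2) : (attractingCone i).Nonempty := by
  fin_cases i
  · exact ⟨⟨![1, 1], by simp⟩, by simp [attractingCone]⟩
  · exact ⟨⟨![0, 1], by simp⟩, by simp [attractingCone]⟩

lemma pairwise_disjoint_attractingCone : Pairwise (Disjoint on attractingCone) := by
  intro i j hij
  rw [Function.onFun, Set.disjoint_left]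
  intro v hi hj
  have := v.coord_ne_zero
  fin_cases i <;> fin_cases j <;>
    simp only [attractingCone, Fin.zero_eta, Fin.mk_one, Fin.isValue, Matrix.cons_val_zero,
      Matrix.cons_val_one, Matrix.cons_val_fin_one, Set.mem_ofPred_eq] at hi hj <;> omega

lemma pairwise_disjoint_repellingCone : Pairwise (Disjoint on repellingCone) := by
  intro i j hij
  rw [Function.onFun, Set.disjoint_left]
  intro v hi hj
  have := v.coord_ne_zero
  fin_cases i <;> fin_cases j <;>
    simp only [repellingCone, Fin.zero_eta, Fin.mk_one, Fin.isValue, Matrix.cons_val_zero,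
      Matrix.cons_val_one, Matrix.cons_val_fin_one, Set.mem_ofPred_eq] at hi hj <;> omega

lemma disjoint_attractingCone_repellingCone (i j : Fin 2) :
    Disjoint (attractingCone i) (repellingCone j) := by
  rw [Set.disjoint_left]
  intro v hi hj
  have := v.coord_ne_zero
  fin_cases i <;> fin_cases j <;>
    simp only [attractingCone, repellingCone, Fin.zero_eta, Fin.mk_one, Fin.isValue,
      Matrix.cons_val_zero, Matrix.cons_val_one, Matrix.cons_val_fin_one,
      Set.mem_ofPred_eq] at hi hj <;> omega

lemma generator_smul_compl_repellingCone (i : Fin 2) :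
    generator i • (repellingCone i)ᶜ ⊆ attractingCone i := by
  rw [Set.smul_set_subset_iff]
  intro v hv
  have := v.coord_ne_zero
  fin_cases i <;>
    simp only [generator, attractingCone, repellingCone, f1_smul, f2_smul, SetLike.val_smul,
      Fin.zero_eta, Fin.mk_one, Fin.isValue, Matrix.cons_val_zero, Matrix.cons_val_one,
      Matrix.cons_val_fin_one, Set.mem_compl_iff, Set.mem_ofPred_eq] at hv ⊢ <;> omega

lemma generator_inv_smul_compl_attractingCone (i : Fin 2) :
    generator⁻¹ i • (attractingCone i)ᶜ ⊆ repellingCone i := by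
  rw [Set.smul_set_subset_iff]
  intro v hv
  have := v.coord_ne_zero
  fin_cases i <;>
    simp only [generator, attractingCone, repellingCone, Pi.inv_apply, f1_inv_smul, f2_inv_smul,
      SetLike.val_smul, Fin.zero_eta, Fin.mk_one, Fin.isValue, Matrix.cons_val_zero,
      Matrix.cons_val_one, Matrix.cons_val_fin_one, Set.mem_compl_iff,
      Set.mem_ofPred_eq] at hv ⊢ <;> omega

theorem injective_lift_generator : Function.Injective (FreeGroup.lift generator) :=
  FreeGroup.injective_lift_of_ping_pong generator attractingCone repellingCone
    attractingCone_nonempty pairwise_disjoint_attractingCone pairwise_disjoint_repellingCone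
    disjoint_attractingCone_repellingCone generator_smul_compl_repellingCone
    generator_inv_smul_compl_attractingCone

lemma range_lift_generator : (FreeGroup.lift generator).range = Subgroup.closure {f1, f2} := by
  rw [FreeGroup.range_lift_eq_closure, generator, Matrix.range_cons, Matrix.range_cons,
    Matrix.range_empty, Set.union_empty, Set.singleton_union]

end Sanov

/-- Sanov's theorem: the subgroup of `SL(2,ℤ)` generated by `f1` and `f2` is a free group
of rank 2. -/
theorem sanov_free_subgroup :
    Nonempty ((Subgroup.closure {f1, f2} : Subgroup (Matrix.SpecialLinearGroup (Fin 2) ℤ))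
      ≃* FreeGroup (Fin 2)) :=
  ⟨((MonoidHom.ofInjective Sanov.injective_lift_generator).trans
    (MulEquiv.subgroupCongr Sanov.range_lift_generator)).symm⟩
end

section
/- The principal congruence subgroup Γ(2) of SL(2,Z) is isomorphic to the direct product (Z/2) × F2, where the Z/2 factor is generated by -I and F2 is the free subgroup generated by [[1,2],[0,1]] and [[1,0],[2,1]]. -/
open Matrix Matrix.SpecialLinearGroup CongruenceSubgroup Cardinal
open scoped MatrixGroups Pointwise Function

theorem FreeGroup.injective_lift_of_zpow_ping_pong {ι G α : Type*} [Nontrivial ι] [Group G]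
    [MulAction G α] (a : ι → G) (X : ι → Set α) (hX : ∀ i, (X i).Nonempty)
    (hXdisj : Pairwise (Disjoint on X))
    (hpp : Pairwise fun i j => ∀ n : ℤ, n ≠ 0 → a i ^ n • X j ⊆ X i) :
    Function.Injective (FreeGroup.lift a) := by
  have hlift : FreeGroup.lift a = (Monoid.CoprodI.lift fun i => FreeGroup.lift fun _ => a i).comp
      (freeGroupEquivCoprodI (ι := ι)).toMonoidHom := by
    ext i
    simp
  rw [hlift, MonoidHom.coe_comp]
  refine Function.Injective.comp (Monoid.CoprodI.lift_injective_of_ping_pong _ ?_ X hX hXdisj ?_)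
    freeGroupEquivCoprodI.injective
  · obtain ⟨i⟩ := (inferInstance : Nonempty ι)
    exact Or.inr ⟨i, (natCast_lt_aleph0 (n := 3)).le.trans (aleph0_le_mk _)⟩
  · intro i j hij h hh
    obtain ⟨n, rfl⟩ : ∃ n : ℤ, FreeGroup.of () ^ n = h :=
      ⟨_, FreeGroup.freeGroupUnitEquivInt.symm_apply_apply h⟩
    rw [map_zpow, FreeGroup.lift_apply_of]
    exact hpp hij n (by rintro rfl; exact hh (zpow_zero _))

lemma coe_f1_zpow (n : ℤ) :
    ((f1 ^ n : SL(2, ℤ)) : Matrix (Fin 2) (Fin 2) ℤ) = !![1, 2 * n; 0, 1] := by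
  have hf1 : (f1 : Matrix (Fin 2) (Fin 2) ℤ) = !![(1 : ℤ), 2; 0, 1] := rfl
  induction n using Int.induction_on with
  | zero => rw [zpow_zero, coe_one, one_fin_two, mul_zero]
  | succ n h =>
    rw [_root_.zpow_add_one, coe_mul, h, hf1, mul_fin_two]
    congrm !![?_, ?_; ?_, ?_] <;> ring
  | pred n h =>
    rw [_root_.zpow_sub_one, coe_mul, h, coe_inv, hf1, adjugate_fin_two_of, mul_fin_two]
    congrm !![?_, ?_; ?_, ?_] <;> ring

lemma coe_f2_zpow (n : ℤ) :
    ((f2 ^ n : SL(2, ℤ)) : Matrix (Fin 2) (Fin 2) ℤ) = !![1, 0; 2 * n, 1] := by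
  have hf2 : (f2 : Matrix (Fin 2) (Fin 2) ℤ) = !![(1 : ℤ), 0; 2, 1] := rfl
  induction n using Int.induction_on with
  | zero => rw [zpow_zero, coe_one, one_fin_two, mul_zero]
  | succ n h =>
    rw [_root_.zpow_add_one, coe_mul, h, hf2, mul_fin_two]
    congrm !![?_, ?_; ?_, ?_] <;> ring
  | pred n h =>
    rw [_root_.zpow_sub_one, coe_mul, h, coe_inv, hf2, adjugate_fin_two_of, mul_fin_two]
    congrm !![?_, ?_; ?_, ?_] <;> ring

lemma abs_lt_abs_add_two_mul {x y : ℤ} (n : ℤ) (hn : n ≠ 0) (h : |x| < |y|) :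
    |y| < |x + 2 * n * y| := by
  have h2 : 2 * |y| ≤ |2 * n * y| := by
    rw [abs_mul, abs_mul, abs_two]
    nlinarith [Int.one_le_abs hn, abs_nonneg y]
  have h3 := abs_sub_abs_le_abs_sub (2 * n * y) (-x)
  rw [abs_neg, sub_neg_eq_add, add_comm] at h3
  linarith

lemma f1_zpow_smul (n : ℤ) (v : Fin 2 → ℤ) : f1 ^ n • v = ![v 0 + 2 * n * v 1, v 1] := by
  rw [Matrix.SpecialLinearGroup.smul_def, coe_f1_zpow, smul_eq_mulVec, mulVec_fin_two]
  simp

lemma f2_zpow_smul (n : ℤ) (v : Fin 2 → ℤ) : f2 ^ n • v = ![v 0, v 1 + 2 * n * v 0] := by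
  rw [Matrix.SpecialLinearGroup.smul_def, coe_f2_zpow, smul_eq_mulVec, mulVec_fin_two]
  simp [add_comm]

theorem injective_lift_f1_f2 : Function.Injective (FreeGroup.lift ![f1, f2]) := by
  refine FreeGroup.injective_lift_of_zpow_ping_pong _
    ![{v : Fin 2 → ℤ | |v 1| < |v 0|}, {v | |v 0| < |v 1|}] ?_ ?_ ?_
  · intro i
    fin_cases i
    exacts [⟨![1, 0], by simp⟩, ⟨![0, 1], by simp⟩]
  · intro i j hij
    fin_cases i <;> fin_cases j
    exacts [absurd rfl hij, Set.disjoint_left.2 fun v (h : |v 1| < |v 0|) h' => lt_asymm h h',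
      Set.disjoint_left.2 fun v (h : |v 0| < |v 1|) h' => lt_asymm h h', absurd rfl hij]
  · intro i j hij n hn
    fin_cases i <;> fin_cases j
    · exact absurd rfl hij
    · exact Set.smul_set_subset_iff.2 fun v hv => by
        simpa [f1_zpow_smul] using abs_lt_abs_add_two_mul n hn hv
    · exact Set.smul_set_subset_iff.2 fun v hv => by
        simpa [f2_zpow_smul] using abs_lt_abs_add_two_mul n hn hv
    · exact absurd rfl hij

lemma mem_Gamma_two_iff {A : SL(2, ℤ)} :
    A ∈ Gamma 2 ↔ Odd (A 0 0) ∧ Even (A 0 1) ∧ Even (A 1 0) ∧ Odd (A 1 1) := by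
  simp only [Gamma_mem, ZMod.intCast_eq_one_iff_odd, ZMod.intCast_eq_zero_iff_even]

lemma f1_mem_Gamma_two : f1 ∈ Gamma 2 := by
  rw [mem_Gamma_two_iff]; simp [f1]

lemma f2_mem_Gamma_two : f2 ∈ Gamma 2 := by
  rw [mem_Gamma_two_iff]; simp [f2]

lemma neg_one_mem_Gamma_two : (-1 : SL(2, ℤ)) ∈ Gamma 2 := by
  rw [mem_Gamma_two_iff]; simp

lemma f1_zpow_mul_apply (n : ℤ) (A : SL(2, ℤ)) :
    (f1 ^ n * A) 0 0 = A 0 0 + 2 * n * A 1 0 ∧ (f1 ^ n * A) 1 0 = A 1 0 := by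
  simp [coe_f1_zpow, mul_apply, Fin.sum_univ_two]

lemma f2_zpow_mul_apply (n : ℤ) (A : SL(2, ℤ)) :
    (f2 ^ n * A) 0 0 = A 0 0 ∧ (f2 ^ n * A) 1 0 = A 1 0 + 2 * n * A 0 0 := by
  simp [coe_f2_zpow, mul_apply, Fin.sum_univ_two, add_comm]

lemma mem_closure_of_lower_left_eq_zero {A : SL(2, ℤ)} (hA : A ∈ Gamma 2) (hc : A 1 0 = 0) :
    A ∈ Subgroup.closure {-1, f1, f2} := by
  have hdet : A 0 0 * A 1 1 = 1 := by
    have := A.det_coe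
    rwa [det_fin_two, hc, mul_zero, sub_zero] at this
  obtain ⟨k, hk⟩ := (mem_Gamma_two_iff.mp hA).2.1
  have hf1 : f1 ∈ Subgroup.closure {-1, f1, f2} := Subgroup.subset_closure (by simp)
  rcases Int.eq_one_or_neg_one_of_mul_eq_one' hdet with ⟨ha, hd⟩ | ⟨ha, hd⟩
  · have : A = f1 ^ k := by
      ext i j; fin_cases i <;> fin_cases j <;> simp [coe_f1_zpow, ha, hd, hc, hk, two_mul]
    exact this ▸ Subgroup.zpow_mem _ hf1 k
  · have : A = -1 * f1 ^ (-k) := by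
      ext i j; fin_cases i <;> fin_cases j <;> simp [coe_f1_zpow, ha, hd, hc, hk, two_mul]
    exact this ▸ Subgroup.mul_mem _ (Subgroup.subset_closure (by simp))
      (Subgroup.zpow_mem _ hf1 _)

lemma exists_zpow_mul_lt {A : SL(2, ℤ)} (hA : A ∈ Gamma 2) (hc : A 1 0 ≠ 0) :
    ∃ B ∈ ({f1, f2} : Set SL(2, ℤ)), ∃ n : ℤ,
      ((B ^ n * A) 0 0).natAbs + ((B ^ n * A) 1 0).natAbs < (A 0 0).natAbs + (A 1 0).natAbs := by
  obtain ⟨ha, -, hc2, -⟩ := mem_Gamma_two_iff.mp hA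
  rw [Int.odd_iff] at ha
  rw [Int.even_iff] at hc2
  have h1 := f1_zpow_mul_apply 1 A
  have h1' := f1_zpow_mul_apply (-1) A
  have h2 := f2_zpow_mul_apply 1 A
  have h2' := f2_zpow_mul_apply (-1) A
  by_cases hlt : (A 1 0).natAbs < (A 0 0).natAbs
  · by_cases hs : (A 0 0 + 2 * A 1 0).natAbs < (A 0 0).natAbs
    · exact ⟨f1, by simp, 1, by omega⟩
    · exact ⟨f1, by simp, -1, by omega⟩
  · by_cases hs : (A 1 0 + 2 * A 0 0).natAbs < (A 1 0).natAbs
    · exact ⟨f2, by simp, 1, by omega⟩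
    · exact ⟨f2, by simp, -1, by omega⟩

theorem Gamma_two_le_closure : Gamma 2 ≤ Subgroup.closure {-1, f1, f2} := by
  intro A hA
  induction h : (A 0 0).natAbs + (A 1 0).natAbs using Nat.strong_induction_on generalizing A with
  | _ m ih =>
  by_cases hc : A 1 0 = 0
  · exact mem_closure_of_lower_left_eq_zero hA hc
  obtain ⟨B, hB, n, hlt⟩ := exists_zpow_mul_lt hA hc
  have hBΓ : B ∈ Gamma 2 := by
    rcases hB with rfl | rfl
    exacts [f1_mem_Gamma_two, f2_mem_Gamma_two]
  have hBA := ih _ (h ▸ hlt) (Subgroup.mul_mem _ (Subgroup.zpow_mem _ hBΓ n) hA) rfl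
  have hBcl : B ∈ Subgroup.closure {-1, f1, f2} :=
    Subgroup.subset_closure (Set.subset_insert _ _ hB)
  simpa using Subgroup.mul_mem _ (Subgroup.zpow_mem _ hBcl (-n)) hBA

def negOnePow : Multiplicative (ZMod 2) →* SL(2, ℤ) where
  toFun m := if m = 1 then 1 else -1
  map_one' := if_pos rfl
  map_mul' := by decide

lemma injective_negOnePow : Function.Injective negOnePow := by decide

lemma negOnePow_eq_one_or_neg_one (m : Multiplicative (ZMod 2)) :
    negOnePow m = 1 ∨ negOnePow m = -1 := by
  by_cases hm : m = 1 <;> simp [negOnePow, hm]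

lemma commute_negOnePow (m : Multiplicative (ZMod 2)) (A : SL(2, ℤ)) :
    Commute (negOnePow m) A := by
  rcases negOnePow_eq_one_or_neg_one m with h | h <;> rw [h]
  exacts [Commute.one_left A, Commute.neg_one_left A]

lemma lift_f1_f2_ne_neg_one (w : FreeGroup (Fin 2)) : FreeGroup.lift ![f1, f2] w ≠ -1 := by
  intro h
  have hw : w ^ 2 = 1 := injective_lift_f1_f2 (by simp [h])
  rw [sq_eq_one] at hw
  simpa [hw] using congrArg (fun A : SL(2, ℤ) => A 0 0) h

def gammaTwoHom : Multiplicative (ZMod 2) × FreeGroup (Fin 2) →* SL(2, ℤ) :=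
  negOnePow.noncommCoprod (FreeGroup.lift ![f1, f2]) fun m _ => commute_negOnePow m _

lemma gammaTwoHom_ofAdd_one : gammaTwoHom (Multiplicative.ofAdd 1, 1) = -1 := by
  change negOnePow (Multiplicative.ofAdd 1) * FreeGroup.lift ![f1, f2] 1 = -1
  rw [(FreeGroup.lift _).map_one, mul_one]
  rfl

lemma gammaTwoHom_of (i : Fin 2) : gammaTwoHom (1, FreeGroup.of i) = ![f1, f2] i := by
  simp [gammaTwoHom, MonoidHom.noncommCoprod_apply]

lemma injective_gammaTwoHom : Function.Injective gammaTwoHom := by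
  refine (MonoidHom.noncommCoprod_injective _ _ _).2
    ⟨injective_negOnePow, injective_lift_f1_f2, ?_⟩
  rw [Subgroup.disjoint_def]
  rintro _ ⟨m, rfl⟩ ⟨w, hw⟩
  rcases negOnePow_eq_one_or_neg_one m with h | h
  exacts [h, absurd (hw.trans h) (lift_f1_f2_ne_neg_one w)]

lemma range_gammaTwoHom : gammaTwoHom.range = Gamma 2 := by
  refine le_antisymm ?_ (Gamma_two_le_closure.trans ((Subgroup.closure_le _).2 ?_))
  · rw [gammaTwoHom, MonoidHom.noncommCoprod_range, sup_le_iff, FreeGroup.range_lift_eq_closure,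
      Subgroup.closure_le]
    constructor
    · rintro _ ⟨m, rfl⟩
      rcases negOnePow_eq_one_or_neg_one m with h | h <;> rw [h]
      exacts [Subgroup.one_mem _, neg_one_mem_Gamma_two]
    · rintro _ ⟨i, rfl⟩
      fin_cases i
      exacts [f1_mem_Gamma_two, f2_mem_Gamma_two]
  · rintro _ (rfl | rfl | rfl)
    exacts [⟨_, gammaTwoHom_ofAdd_one⟩, ⟨_, gammaTwoHom_of 0⟩, ⟨_, gammaTwoHom_of 1⟩]

/-- The principal congruence subgroup `Γ(2)` of `SL(2,ℤ)` is isomorphic to the direct product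
`(ℤ/2) × F₂`, where the `ℤ/2` factor is generated by `-I` and the free factor `F₂` is
the free subgroup generated by `[[1,2],[0,1]]` and `[[1,0],[2,1]]`. -/
theorem gamma_two_iso_zmod_two_prod_free :
    ∃ e : CongruenceSubgroup.Gamma 2 ≃* Multiplicative (ZMod 2) × FreeGroup (Fin 2),
      (∀ x : CongruenceSubgroup.Gamma 2,
        (x : Matrix.SpecialLinearGroup (Fin 2) ℤ) = -1 → e x = (Multiplicative.ofAdd 1, 1)) ∧
      (∀ x : CongruenceSubgroup.Gamma 2,
        (x : Matrix.SpecialLinearGroup (Fin 2) ℤ) = f1 → e x = (1, FreeGroup.of 0)) ∧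
      (∀ x : CongruenceSubgroup.Gamma 2,
        (x : Matrix.SpecialLinearGroup (Fin 2) ℤ) = f2 → e x = (1, FreeGroup.of 1)) := by
  let e := ((MonoidHom.ofInjective injective_gammaTwoHom).trans
    (MulEquiv.subgroupCongr range_gammaTwoHom)).symm
  have he : ∀ (x : Gamma 2) p, (x : SL(2, ℤ)) = gammaTwoHom p → e x = p := fun x p hx => by
    rw [MulEquiv.symm_apply_eq]
    exact Subtype.ext (by simp [hx, MonoidHom.ofInjective_apply])
  exact ⟨e, fun x hx => he x _ (hx.trans gammaTwoHom_ofAdd_one.symm),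
    fun x hx => he x _ (hx.trans (gammaTwoHom_of 0).symm),
    fun x hx => he x _ (hx.trans (gammaTwoHom_of 1).symm)⟩
end

section
/- Let G ≤ A(3) be a subgroup whose twist part contains an element acting by -I on some factor, acting on U³ as in the toroidal orbifold setup. If an element h = (ε, γ, σ) of A(3) (with ε ∈ T⁶, γ ∈ Γ³, σ ∈ S3) normalizes G, then ε lies in the subgroup (Z/4)⁶ of points of order dividing 4. -/
/-!
Pick `g ∈ G` whose twist is `-I` on the factor that `h` moves to factor `i`. Because `-I` acts
on `T²` by inversion, the `i`-th translation part of `h g h⁻¹` is `εᵢ + γᵢ δ + εᵢ` rather than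
`εᵢ + γᵢ δ - εᵢ`. Both it and `γᵢ δ` are `2`-torsion (the former since `h g h⁻¹ ∈ G`), so
`4 εᵢ = 0`.
-/

/-- The 2-torus `T² = (ℝ/ℤ)²`. -/
abbrev T2 : Type := AddCircle (1 : ℝ) × AddCircle (1 : ℝ)

/-- The element `-I` of `SL(2,ℤ)`. -/
def negI : Matrix.SpecialLinearGroup (Fin 2) ℤ := -1

namespace SemidirectProduct

variable {N H : Type*} [Group N] [Group H] {φ : H →* MulAut N}

theorem conj_left_of_right_eq_one (h g : N ⋊[φ] H) (hg : g.right = 1) :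
    (h * g * h⁻¹).left = h.left * φ h.right g.left * h.left⁻¹ := by
  simp [hg]

theorem conj_left_of_right_acts_by_inv {t : H} (ht : ∀ n, φ t n = n⁻¹) (a b : N ⋊[φ] H)
    (hb : b.right = t) :
    (a * b * a⁻¹).left = a.left * φ a.right b.left * a.left := by
  simp [hb, ht, mul_assoc]

end SemidirectProduct

theorem nsmul_toAdd_map_eq_zero {A B F : Type*} [AddMonoid A] [AddMonoid B]
    [FunLike F (Multiplicative A) (Multiplicative B)]
    [MonoidHomClass F (Multiplicative A) (Multiplicative B)] (f : F) {n : ℕ}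
    {x : Multiplicative A} (hx : n • x.toAdd = 0) : n • (f x).toAdd = 0 := by
  rw [← toAdd_pow, ← map_pow, ← ofAdd_toAdd (x ^ n), toAdd_pow, hx]
  simp

theorem four_nsmul_eq_zero_of_two_nsmul {A : Type*} [AddCommGroup A] {a x : A}
    (hax : 2 • (a + x + a) = 0) (hx : 2 • x = 0) : 4 • a = 0 :=
  calc 4 • a = 2 • (a + x + a) - 2 • x := by abel
    _ = 0 := by rw [hax, hx, sub_zero]

theorem negI_apply_eq_inv
    (φ : Matrix.SpecialLinearGroup (Fin 2) ℤ →* MulAut (Multiplicative T2))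
    (hφ : ∀ (γ : Matrix.SpecialLinearGroup (Fin 2) ℤ) (ε : T2),
      Multiplicative.toAdd (φ γ (Multiplicative.ofAdd ε)) =
        ((γ.1 0 0) • ε.1 - (γ.1 0 1) • ε.2, -((γ.1 1 0) • ε.1) + (γ.1 1 1) • ε.2))
    (x : Multiplicative T2) : φ negI x = x⁻¹ := by
  apply Multiplicative.toAdd.injective
  rw [← ofAdd_toAdd x, hφ]
  simp [negI, Prod.ext_iff]

/-- Let `A = T² ⋊ SL(2,ℤ)` (action encoded by `φ`) and `A⁽³⁾ = A³ ⋊ S₃` (permutation action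
encoded by `ψ`).  Let `G ≤ A⁽³⁾` be a subgroup each of whose elements is of the form `(δ, ι, 1)`
with `δ` a point of order dividing 2 of `T⁶` and `ι` a pure twist (`±I` on the three factors,
with an even number of `-I`'s), and suppose that for each factor `i`, `G` contains an element
acting by `-I` on the `i`-th factor.  If `h = (ε, γ, σ) ∈ A⁽³⁾` normalizes `G`, then `ε` lies
in the subgroup `(ℤ/4)⁶` of points of order dividing 4. -/
theorem normalizer_translation_component_four_torsion
    (φ : Matrix.SpecialLinearGroup (Fin 2) ℤ →* MulAut (Multiplicative T2))
    (hφ : ∀ (γ : Matrix.SpecialLinearGroup (Fin 2) ℤ) (ε : T2),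
      Multiplicative.toAdd (φ γ (Multiplicative.ofAdd ε)) =
        ((γ.1 0 0) • ε.1 - (γ.1 0 1) • ε.2, -((γ.1 1 0) • ε.1) + (γ.1 1 1) • ε.2))
    (ψ : Equiv.Perm (Fin 3) →*
      MulAut (Fin 3 → Multiplicative T2 ⋊[φ] Matrix.SpecialLinearGroup (Fin 2) ℤ))
    (hψ : ∀ (σ : Equiv.Perm (Fin 3))
      (f : Fin 3 → Multiplicative T2 ⋊[φ] Matrix.SpecialLinearGroup (Fin 2) ℤ) (i : Fin 3),
      ψ σ f i = f (σ⁻¹ i))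
    (G : Subgroup ((Fin 3 → Multiplicative T2 ⋊[φ] Matrix.SpecialLinearGroup (Fin 2) ℤ)
      ⋊[ψ] Equiv.Perm (Fin 3)))
    (hGshape : ∀ g ∈ G, g.right = 1 ∧
      (∀ i : Fin 3, 2 • Multiplicative.toAdd (g.left i).left = 0) ∧
      ∃ s : Finset (Fin 3), Even s.card ∧
        ∀ i : Fin 3, (g.left i).right = if i ∈ s then negI else 1)
    (hGtwist : ∀ i : Fin 3, ∃ g ∈ G, (g.left i).right = negI)
    (h : (Fin 3 → Multiplicative T2 ⋊[φ] Matrix.SpecialLinearGroup (Fin 2) ℤ)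
      ⋊[ψ] Equiv.Perm (Fin 3))
    (hnorm : ∀ g ∈ G, h * g * h⁻¹ ∈ G) :
    ∀ i : Fin 3, 4 • Multiplicative.toAdd ((h.left i).left) = 0 := by
  intro i
  obtain ⟨g, hgG, hg_twist⟩ := hGtwist (h.right⁻¹ i)
  obtain ⟨hg_right, hg_tors, -⟩ := hGshape g hgG
  obtain ⟨-, hconj_tors, -⟩ := hGshape _ (hnorm g hgG)
  have hconj : ((h * g * h⁻¹).left i).left =
      (h.left i).left * φ (h.left i).right (g.left (h.right⁻¹ i)).left * (h.left i).left := by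
    rw [SemidirectProduct.conj_left_of_right_eq_one h g hg_right, Pi.mul_apply, Pi.mul_apply,
      hψ, Pi.inv_apply,
      SemidirectProduct.conj_left_of_right_acts_by_inv (negI_apply_eq_inv φ hφ) _ _ hg_twist]
  have htors := hconj_tors i
  rw [hconj, toAdd_mul, toAdd_mul] at htors
  exact four_nsmul_eq_zero_of_two_nsmul htors
    (nsmul_toAdd_map_eq_zero (φ (h.left i).right) (hg_tors _))
end

section
/- Let h ∈ H = N_{A(3)}(G) act on a fiber Y of the universal family and suppose the induced action of h on the quotient X = Y/G is trivial. Then h ∈ G. -/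
open scoped Pointwise


/-- The real torus underlying an elliptic curve, `(ℝ/ℤ)²`. -/
abbrev Ecurve : Type := AddCircle (1 : ℝ) × AddCircle (1 : ℝ)

/-- The real torus underlying `Y = E₁ × E₂ × E₃`. -/
abbrev Ytor : Type := Fin 3 → Ecurve

/-- Let `G ≤ H` be groups of transformations of `Y = E₁ × E₂ × E₃`, where `G` is finite and
acts by translations by 2-torsion points combined with elliptic inversions, and every element
of `H` acts affinely (a permutation of the factors, group automorphisms of each factor, and a
translation), as the normalizer `H = N_{A⁽³⁾}(G)` does through the universal family.  If
`h ∈ H` induces the trivial action on the quotient `X = Y/G` (i.e. for every `y` there is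
`g ∈ G` with `h·y = g·y`), then `h ∈ G`. -/
theorem trivial_on_quotient_mem
    (G H : Subgroup (Equiv.Perm Ytor)) (hGH : G ≤ H)
    (hGfin : (G : Set (Equiv.Perm Ytor)).Finite)
    (hG : ∀ g ∈ G, ∃ (s : Fin 3 → Bool) (c : Fin 3 → Ecurve),
      (∀ i, c i + c i = 0) ∧
      ∀ (y : Ytor) (i : Fin 3), g y i = (if s i then y i else -(y i)) + c i)
    (hH : ∀ h ∈ H, ∃ (σ : Equiv.Perm (Fin 3)) (M : Fin 3 → (Ecurve ≃+ Ecurve))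
      (c : Fin 3 → Ecurve),
      ∀ (y : Ytor) (i : Fin 3), h y i = M i (y (σ⁻¹ i)) + c i)
    (h : Equiv.Perm Ytor) (hh : h ∈ H)
    (htriv : ∀ y : Ytor, ∃ g ∈ G, h y = g y) :
    h ∈ G := by
  classical
  obtain ⟨σ, M, c, hMc⟩ := hH h hh
  choose! s' c' hc2 hgeq using hG
  -- The "linear part" of `h ∘ g⁻¹`, as an additive homomorphism of `Ytor`.
  set L : Equiv.Perm Ytor → (Ytor →+ Ytor) := fun g =>
    AddMonoidHom.mk' (fun y i => M i (y (σ⁻¹ i)) - (if s' g i then y i else -(y i)))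
      (by
        intro y z
        funext i
        simp only [Pi.add_apply, map_add]
        split_ifs <;> abel) with hLdef
  have hLapp : ∀ g (y : Ytor) (i : Fin 3),
      L g y i = M i (y (σ⁻¹ i)) - (if s' g i then y i else -(y i)) := fun _ _ _ => rfl
  have hdiff : ∀ g ∈ G, ∀ (y : Ytor) (i : Fin 3),
      h y i = g y i + (L g y i + (c i - c' g i)) := by
    intro g hg y i
    rw [hMc y i, hgeq g hg y i, hLapp]
    abel
  have key : ∀ g ∈ G, ∀ y : Ytor, h y = g y ↔ L g y = fun i => c' g i - c i := by
    intro g hg y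
    constructor
    · intro hy
      funext i
      have h1 : g y i = g y i + (L g y i + (c i - c' g i)) := by
        rw [← hdiff g hg y i, hy]
      have h2 : L g y i + (c i - c' g i) = 0 := by
        have := (left_eq_add.mp h1)
        exact this
      have := eq_neg_of_add_eq_zero_left h2
      rw [neg_sub] at this
      exact this
    · intro hy
      funext i
      rw [hdiff g hg y i, congrFun hy i]
      abel
  -- the witness point for each `g` whose coincidence set is nonempty
  set w : Equiv.Perm Ytor → Ytor := fun g =>
    if hgw : ∃ y : Ytor, h y = g y then hgw.choose else 0 with hwdef
  have hw : ∀ g, (∃ y : Ytor, h y = g y) → h (w g) = g (w g) := by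
    intro g hgw
    simp only [hwdef, dif_pos hgw]
    exact hgw.choose_spec
  set sfin : Finset (Equiv.Perm Ytor) :=
    hGfin.toFinset.filter (fun g => ∃ y : Ytor, h y = g y) with hsfin
  have hmem : ∀ g ∈ sfin, g ∈ G ∧ ∃ y : Ytor, h y = g y := by
    intro g hg
    rw [hsfin, Finset.mem_filter, Set.Finite.mem_toFinset] at hg
    exact hg
  -- `Ytor` is covered by the cosets `w g +ᵥ ker (L g)` for `g ∈ sfin`
  have hcover : ⋃ g ∈ sfin, w g +ᵥ ((L g).ker : Set Ytor) = Set.univ := by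
    rw [Set.eq_univ_iff_forall]
    intro y
    obtain ⟨g, hg, hy⟩ := htriv y
    have hex : ∃ y : Ytor, h y = g y := ⟨y, hy⟩
    have hgs : g ∈ sfin := by
      rw [hsfin, Finset.mem_filter, Set.Finite.mem_toFinset]
      exact ⟨hg, hex⟩
    have hwg := hw g hex
    have hker : -(w g) + y ∈ (L g).ker := by
      rw [AddMonoidHom.mem_ker, map_add, map_neg]
      rw [(key g hg y).mp hy, (key g hg (w g)).mp hwg]
      abel
    refine Set.mem_biUnion hgs ?_
    rw [Set.mem_vadd_set_iff_neg_vadd_mem]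
    exact hker
  obtain ⟨g, hgs, hfi⟩ := AddSubgroup.exists_finiteIndex_of_leftCoset_cover hcover
  obtain ⟨hgG, hex⟩ := hmem g hgs
  -- a finite-index subgroup of the divisible group `Ytor` is everything
  have hker_top : ∀ y : Ytor, y ∈ (L g).ker := by
    intro y
    have hn : (L g).ker.index ≠ 0 := hfi.index_ne_zero
    have hz : ((L g).ker.index : ℤ) • DivisibleBy.div y ((L g).ker.index : ℤ) = y :=
      DivisibleBy.div_cancel y (by exact_mod_cast hn)
    have hmem' := AddSubgroup.nsmul_index_mem (L g).ker (DivisibleBy.div y ((L g).ker.index : ℤ))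
    rwa [← natCast_zsmul, hz] at hmem'
  -- hence `L g = 0`, so `h` and `g` differ by a constant, which is `0` by the witness
  have hwg := hw g hex
  have he0 : (fun i => c' g i - c i) = (0 : Ytor) := by
    rw [← (key g hgG (w g)).mp hwg]
    exact AddMonoidHom.mem_ker.mp (hker_top (w g))
  have : h = g := by
    apply Equiv.ext
    intro y
    apply (key g hgG y).mpr
    rw [he0]
    exact AddMonoidHom.mem_ker.mp (hker_top y)
  rw [this]
  exact hgG
end

section
/- Let V = K² with the SL(2,Z)-action where s = [[0,1],[-1,0]] acts by s·e1 = -e2, s·e2 = -e1; t = [[1,1],[0,1]] acts by t·e1 = e1, t·e2 = e1 - e2; and r = [[1,0],[1,1]] acts by r·e1 = e2 - e1, r·e2 = e2 (for char K ≠ 2,3). Then the subspace of V ⊗ V invariant under the diagonal action of the group generated by (s,s), (t,t), (r,r) is one-dimensional, spanned by -2 e1⊗e1 + e1⊗e2 + e2⊗e1 - 2 e2⊗e2. -/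
open TensorProduct

/-- The action of `s = [[0,1],[-1,0]]` on `V = K²` (`s·e₁ = -e₂`, `s·e₂ = -e₁`). -/
noncomputable def sAct (K : Type) [Field K] : (Fin 2 → K) →ₗ[K] (Fin 2 → K) :=
  Matrix.toLin' !![(0 : K), -1; -1, 0]

/-- The action of `t = [[1,1],[0,1]]` on `V = K²` (`t·e₁ = e₁`, `t·e₂ = e₁ - e₂`). -/
noncomputable def tAct (K : Type) [Field K] : (Fin 2 → K) →ₗ[K] (Fin 2 → K) :=
  Matrix.toLin' !![(1 : K), 1; 0, -1]

/-- The action of `r = [[1,0],[1,1]]` on `V = K²` (`r·e₁ = e₂ - e₁`, `r·e₂ = e₂`). -/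
noncomputable def rAct (K : Type) [Field K] : (Fin 2 → K) →ₗ[K] (Fin 2 → K) :=
  Matrix.toLin' !![(-1 : K), 0; 1, 1]

/-!
Under the identification of `K² ⊗ K²` with `2 × 2` matrices, `eᵢ ⊗ eⱼ ↦ Eᵢⱼ`, the diagonal
action of `g` becomes the congruence `M ↦ g M gᵀ`. Invariance under `s` forces `M = !![a, b; b, a]`,
and invariance under `t` then forces `a = -2 b`; conversely `!![-2, 1; 1, -2]` is fixed by `s`, `t`
and `r`.
-/

open Matrix

section TensorMatrix

variable {R : Type*} [CommRing R] {m n : Type*} [Fintype m] [Fintype n]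

noncomputable def tensorEquivMatrix : (m → R) ⊗[R] (n → R) ≃ₗ[R] Matrix m n R :=
  ((Pi.basisFun R m).tensorProduct (Pi.basisFun R n)).equivFun ≪≫ₗ LinearEquiv.curry R R m n ≪≫ₗ
    ofLinearEquiv R

theorem tensorEquivMatrix_tmul (x : m → R) (y : n → R) :
    tensorEquivMatrix (x ⊗ₜ y) = vecMulVec x y := by
  ext i j
  simp only [tensorEquivMatrix, LinearEquiv.trans_apply, coe_ofLinearEquiv, of_apply,
    LinearEquiv.coe_curry, Function.curry_apply, Module.Basis.equivFun_apply]
  rw [Module.Basis.tensorProduct_repr_tmul_apply, Pi.basisFun_repr, Pi.basisFun_repr, smul_eq_mul,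
    mul_comm, vecMulVec_apply]

theorem tensorEquivMatrix_map_toLin' {m' n' : Type*} [Fintype m'] [Fintype n'] [DecidableEq m]
    [DecidableEq n] (A : Matrix m' m R) (B : Matrix n' n R) (w : (m → R) ⊗[R] (n → R)) :
    tensorEquivMatrix (map (toLin' A) (toLin' B) w) = A * tensorEquivMatrix w * Bᵀ := by
  induction w using TensorProduct.induction_on with
  | zero => simp
  | tmul x y =>
    rw [map_tmul, tensorEquivMatrix_tmul, tensorEquivMatrix_tmul, toLin'_apply, toLin'_apply,
      mul_vecMulVec, vecMulVec_mul, vecMul_transpose]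
  | add w₁ w₂ h₁ h₂ => simp only [map_add, h₁, h₂, Matrix.mul_add, Matrix.add_mul]

theorem map_toLin'_eq_self_iff [DecidableEq m] (A : Matrix m m R) (w : (m → R) ⊗[R] (m → R)) :
    map (toLin' A) (toLin' A) w = w ↔ A * tensorEquivMatrix w * Aᵀ = tensorEquivMatrix w := by
  rw [← tensorEquivMatrix_map_toLin', tensorEquivMatrix.injective.eq_iff]

end TensorMatrix

theorem mul_mul_transpose_invariant_iff_exists_smul {R : Type*} [CommRing R]
    (M : Matrix (Fin 2) (Fin 2) R) :
    (!![0, -1; -1, 0] * M * !![(0 : R), -1; -1, 0]ᵀ = M ∧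
      !![1, 1; 0, -1] * M * !![(1 : R), 1; 0, -1]ᵀ = M ∧
      !![-1, 0; 1, 1] * M * !![(-1 : R), 0; 1, 1]ᵀ = M) ↔
    ∃ k : R, k • !![-2, 1; 1, -2] = M := by
  obtain ⟨a, b, c, d, rfl⟩ : ∃ a b c d : R, M = !![a, b; c, d] := ⟨_, _, _, _, M.eta_fin_two⟩
  simp only [← Matrix.ext_iff, Fin.forall_fin_two, mul_apply, Fin.sum_univ_two, transpose_apply,
    of_apply, cons_val_zero, cons_val_one, cons_val_fin_one, Matrix.smul_apply, smul_eq_mul]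
  constructor
  · rintro ⟨⟨⟨hda, -⟩, hcb, -⟩, ⟨⟨-, hdb⟩, -⟩, -⟩
    exact ⟨b, ⟨by linear_combination hda + hdb, by ring⟩, by linear_combination hcb,
      by linear_combination hdb⟩
  · rintro ⟨k, ⟨rfl, rfl⟩, rfl, rfl⟩
    constructorm* _ ∧ _ <;> ring

theorem tensorEquivMatrix_invariant_vector {R : Type*} [CommRing R] :
    tensorEquivMatrix
        ((-(2 : R)) • ((Pi.single 0 1 : Fin 2 → R) ⊗ₜ[R] (Pi.single 0 1 : Fin 2 → R)) +
          (Pi.single 0 1 : Fin 2 → R) ⊗ₜ[R] (Pi.single 1 1 : Fin 2 → R) +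
          (Pi.single 1 1 : Fin 2 → R) ⊗ₜ[R] (Pi.single 0 1 : Fin 2 → R) -
          (2 : R) • ((Pi.single 1 1 : Fin 2 → R) ⊗ₜ[R] (Pi.single 1 1 : Fin 2 → R))) =
      !![-2, 1; 1, -2] := by
  ext i j
  fin_cases i <;> fin_cases j <;> simp [tensorEquivMatrix_tmul, vecMulVec_apply]

theorem diagonal_invariants_one_dimensional_general
    (K : Type) [Field K] :
    {w : TensorProduct K (Fin 2 → K) (Fin 2 → K) |
        TensorProduct.map (sAct K) (sAct K) w = w ∧
        TensorProduct.map (tAct K) (tAct K) w = w ∧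
        TensorProduct.map (rAct K) (rAct K) w = w} =
      (Submodule.span K
        {(-(2 : K)) • ((Pi.single 0 1 : Fin 2 → K) ⊗ₜ[K] (Pi.single 0 1 : Fin 2 → K)) +
          (Pi.single 0 1 : Fin 2 → K) ⊗ₜ[K] (Pi.single 1 1 : Fin 2 → K) +
          (Pi.single 1 1 : Fin 2 → K) ⊗ₜ[K] (Pi.single 0 1 : Fin 2 → K) -
          (2 : K) • ((Pi.single 1 1 : Fin 2 → K) ⊗ₜ[K] (Pi.single 1 1 : Fin 2 → K))} :
        Set (TensorProduct K (Fin 2 → K) (Fin 2 → K))) := by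
  ext w
  simp only [Set.mem_ofPred_eq, SetLike.mem_coe, Submodule.mem_span_singleton, sAct, tAct, rAct,
    map_toLin'_eq_self_iff]
  simp_rw [← tensorEquivMatrix.injective.eq_iff, map_smul, tensorEquivMatrix_invariant_vector]
  exact mul_mul_transpose_invariant_iff_exists_smul _

/-- Let `V = K²` (char `K ≠ 2, 3`) with the `SL(2,𝔽₂)`-action where `s·e₁ = -e₂, s·e₂ = -e₁`,
`t·e₁ = e₁, t·e₂ = e₁ - e₂`, `r·e₁ = e₂ - e₁, r·e₂ = e₂`.  Then the subspace of `V ⊗ V`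
invariant under the diagonal action of the group generated by `(s,s), (t,t), (r,r)` is
one-dimensional, spanned by `-2 e₁⊗e₁ + e₁⊗e₂ + e₂⊗e₁ - 2 e₂⊗e₂`. -/
theorem diagonal_invariants_one_dimensional
    (K : Type) [Field K] (h2 : (2 : K) ≠ 0) (h3 : (3 : K) ≠ 0) :
    {w : TensorProduct K (Fin 2 → K) (Fin 2 → K) |
        TensorProduct.map (sAct K) (sAct K) w = w ∧
        TensorProduct.map (tAct K) (tAct K) w = w ∧
        TensorProduct.map (rAct K) (rAct K) w = w} =
      (Submodule.span K
        {(-(2 : K)) • ((Pi.single 0 1 : Fin 2 → K) ⊗ₜ[K] (Pi.single 0 1 : Fin 2 → K)) +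
          (Pi.single 0 1 : Fin 2 → K) ⊗ₜ[K] (Pi.single 1 1 : Fin 2 → K) +
          (Pi.single 1 1 : Fin 2 → K) ⊗ₜ[K] (Pi.single 0 1 : Fin 2 → K) -
          (2 : K) • ((Pi.single 1 1 : Fin 2 → K) ⊗ₜ[K] (Pi.single 1 1 : Fin 2 → K))} :
        Set (TensorProduct K (Fin 2 → K) (Fin 2 → K))) :=
  diagonal_invariants_one_dimensional_general K
end
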